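/- arXiv:2008.13303 — 7 statements merged into one kernel-verified Lean document; each statement's English description precedes it below -/
import Mathlib

section
/- For an integer n, the set of rationals r/s (in lowest terms, s ≥ 0) forming a Farey pair with n/1 is exactly { (kn-1)/k : k ∈ ℤ, k > 0 } ∪ { (kn+1)/k : k ∈ ℤ, k ≥ 0 }. -/
/-- Two fractions `a/b`, `c/d` form a Farey pair when `a*d - b*c = ±1`. -/
def FareyPair (a b : ℤ × ℤ) : Prop :=
  a.1 * b.2 - a.2 * b.1 = 1 ∨ a.1 * b.2 - a.2 * b.1 = -1

/-- An extended rational: a fraction in lowest terms with nonnegative denominator,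
where the fraction with denominator `0` is `1/0 = ∞`. -/
def IsExtRat (v : ℤ × ℤ) : Prop :=
  0 ≤ v.2 ∧ Int.gcd v.1 v.2 = 1 ∧ (v.2 = 0 → v.1 = 1)

lemma gcd_aux (k n c : ℤ) (hc : c = 1 ∨ c = -1) : Int.gcd (k * n + c) k = 1 := by
  have h : IsCoprime (k * n + c) k := by
    rcases hc with rfl | rfl
    · exact ⟨1, -n, by ring⟩
    · exact ⟨-1, n, by ring⟩
  exact Int.isCoprime_iff_gcd_eq_one.mp h

/-- The boundary of `n/1`: the extended rationals `r/s` forming a Farey pair with `n/1`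
are exactly `{(kn-1)/k : k > 0} ∪ {(kn+1)/k : k ≥ 0}` (with `k = 0` giving `1/0`). -/
theorem boundary_of_integer (n : ℤ) :
    {v : ℤ × ℤ | IsExtRat v ∧ FareyPair v (n, 1)} =
      {v : ℤ × ℤ | ∃ k : ℤ, 0 < k ∧ v = (k * n - 1, k)} ∪
      {v : ℤ × ℤ | ∃ k : ℤ, 0 ≤ k ∧ v = (k * n + 1, k)} := by
  ext ⟨r, s⟩
  simp only [Set.mem_setOf_eq, Set.mem_union, IsExtRat, FareyPair, Prod.mk.injEq]
  constructor
  · rintro ⟨⟨hs, hg, h0⟩, h | h⟩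
    · right
      exact ⟨s, hs, by omega, rfl⟩
    · left
      refine ⟨s, ?_, by omega, rfl⟩
      rcases lt_or_eq_of_le hs with h' | h'
      · exact h'
      · exfalso
        obtain rfl := h'.symm
        simp only [zero_mul] at h
        have := h0 rfl
        omega
  · rintro (⟨k, hk, hr, hs⟩ | ⟨k, hk, hr, hs⟩) <;> subst hr <;> subst hs
    · refine ⟨⟨le_of_lt hk, ?_, by omega⟩, Or.inr (by ring)⟩
      have := gcd_aux s n (-1) (Or.inr rfl)
      simpa [sub_eq_add_neg] using this
    · exact ⟨⟨hk, gcd_aux s n 1 (Or.inl rfl), fun h => by subst h; simp⟩, Or.inl (by ring)⟩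
end

section
/- Let p/q ∈ ℚ \ ℤ with parents γ_L = r/s and γ_R = t/u (the unique Farey pair with mediant p/q, where γ_L < p/q < γ_R). Then the set of rationals forming a Farey pair with p/q is exactly { γ_L ⊕^k (p/q) : k ≥ 0 } ∪ { γ_R ⊕^k (p/q) : k ≥ 0 }, i.e., the set { (r+kp)/(s+kq) : k ≥ 0 } ∪ { (t+kp)/(u+kq) : k ≥ 0 }. -/
/-- For a non-integer rational `p/q` (so `q ≥ 2`) with parents `γ_L = r/s` and
`γ_R = t/u` (the Farey pair with mediant `p/q` and `r/s < p/q < t/u`), the set of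
rationals forming a Farey pair with `p/q` is exactly
`{(r+kp)/(s+kq) : k ≥ 0} ∪ {(t+kp)/(u+kq) : k ≥ 0}`. -/
theorem boundary_of_noninteger (p q r s t u : ℤ) (hq : 2 ≤ q) (hs : 0 < s) (hu : 0 < u)
    (hnum : p = r + t) (hden : q = s + u)
    (hpar : FareyPair (r, s) (t, u))
    (horder : r * q < s * p) :
    {v : ℤ × ℤ | 0 < v.2 ∧ FareyPair v (p, q)} =
      {v : ℤ × ℤ | ∃ k : ℕ, v = (r + k * p, s + k * q)} ∪
      {v : ℤ × ℤ | ∃ k : ℕ, v = (t + k * p, u + k * q)} := by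
  have key : r * q - s * p = r * u - s * t := by rw [hnum, hden]; ring
  have key2 : t * q - u * p = s * t - r * u := by rw [hnum, hden]; ring
  have hrq : r * q - s * p = -1 := by
    rcases hpar with h | h <;> simp only at h <;> linarith
  have htq : t * q - u * p = 1 := by linarith
  have hq0 : (0:ℤ) < q := by linarith
  ext ⟨a, b⟩
  simp only [Set.mem_setOf_eq, Set.mem_union, FareyPair]
  constructor
  · rintro ⟨hb, hF | hF⟩
    · -- a*q - b*p = 1, same family as (t,u)
      right
      have hcop : IsCoprime q p := ⟨t, -u, by linarith⟩
      have hdvd : q ∣ (b - u) := by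
        have : q ∣ (b - u) * p := ⟨a - t, by ring_nf; ring_nf at hF; linarith⟩
        exact hcop.dvd_of_dvd_mul_right this
      obtain ⟨k, hk⟩ := hdvd
      have ha : a - t = k * p := by
        have h2 : (a - t) * q = (k * p) * q := by
          have h3 : (a - t) * q = (b - u) * p := by ring_nf; ring_nf at hF; linarith
          rw [h3, hk]; ring
        exact mul_right_cancel₀ (by positivity) h2
      have hk0 : 0 ≤ k := by
        by_contra h
        push_neg at h
        have h1 : q * k ≤ q * (-1) := mul_le_mul_of_nonneg_left (by omega) hq0.le
        linarith
      refine ⟨k.toNat, ?_⟩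
      have hkt : (k.toNat : ℤ) = k := Int.toNat_of_nonneg hk0
      rw [Prod.ext_iff]
      refine ⟨?_, ?_⟩ <;> simp only [hkt] <;> linarith [mul_comm q k]
    · -- a*q - b*p = -1, same family as (r,s)
      left
      have hcop : IsCoprime q p := ⟨t, -u, by linarith⟩
      have hdvd : q ∣ (b - s) := by
        have : q ∣ (b - s) * p := ⟨a - r, by ring_nf; ring_nf at hF; linarith⟩
        exact hcop.dvd_of_dvd_mul_right this
      obtain ⟨k, hk⟩ := hdvd
      have ha : a - r = k * p := by
        have h2 : (a - r) * q = (k * p) * q := by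
          have h3 : (a - r) * q = (b - s) * p := by ring_nf; ring_nf at hF; linarith
          rw [h3, hk]; ring
        exact mul_right_cancel₀ (by positivity) h2
      have hk0 : 0 ≤ k := by
        by_contra h
        push_neg at h
        have h1 : q * k ≤ q * (-1) := mul_le_mul_of_nonneg_left (by omega) hq0.le
        linarith
      refine ⟨k.toNat, ?_⟩
      have hkt : (k.toNat : ℤ) = k := Int.toNat_of_nonneg hk0
      rw [Prod.ext_iff]
      refine ⟨?_, ?_⟩ <;> simp only [hkt] <;> linarith [mul_comm q k]
  · rintro (⟨k, hk⟩ | ⟨k, hk⟩) <;> simp only [Prod.mk.injEq] at hk <;>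
      obtain ⟨rfl, rfl⟩ := hk
    · refine ⟨?_, Or.inr ?_⟩
      · show (0:ℤ) < s + (k : ℤ) * q; positivity
      · show (r + (k:ℤ) * p) * q - (s + (k:ℤ) * q) * p = -1
        linear_combination hrq
    · refine ⟨?_, Or.inl ?_⟩
      · show (0:ℤ) < u + (k : ℤ) * q; positivity
      · show (t + (k:ℤ) * p) * q - (u + (k:ℤ) * q) * p = 1
        linear_combination htq
end

section
/- Let α = p/q ∈ ℚ \ ℤ with left parent γ_L = r/s. Identifying each rational x/y with the point (x/y, 1/y) in the plane, all elements of the left boundary sequence ∂_L(α) = { γ_L ⊕^k α : k ≥ 0 } lie on the straight line through (r/s, 1/s) and (p/q, 0), which has slope -q. -/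
/-!
A fraction `x/y` with `p * y - q * x = 1` satisfies `x/y - p/q = -1/(q y)`, i.e. the point
`(x/y, 1/y)` lies on the line of slope `-q` through `(p/q, 0)`. The mediant iterates
`(r + k p)/(s + k q)` keep the determinant `p s - q r = 1` of the left parent.
-/

theorem one_div_eq_neg_mul_sub_of_det_eq_one {K : Type*} [Field K] {p q x y : K}
    (hq : q ≠ 0) (hy : y ≠ 0) (hdet : p * y - q * x = 1) :
    1 / y = -q * (x / y - p / q) := by
  field_simp
  linear_combination -hdet

/-- Let `α = p/q` be a non-integer rational with left parent `γ_L = r/s`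
(so `p*s - q*r = 1` with `r/s < p/q`). Identifying `x/y` with the point `(x/y, 1/y)`,
every element `γ_L ⊕^k α = (r+kp)/(s+kq)` of the left boundary sequence lies on the
straight line through `(r/s, 1/s)` and `(p/q, 0)`, which has slope `-q`. -/
theorem left_boundary_on_line (p q r s : ℤ) (hq : 0 < q) (hs : 0 < s)
    (hL : p * s - q * r = 1) :
    ((1 : ℝ) / s - 0) / ((r : ℝ) / s - (p : ℝ) / q) = -(q : ℝ) ∧
    ∀ k : ℕ, (1 : ℝ) / ((s : ℝ) + k * q) =
      -(q : ℝ) * (((r : ℝ) + k * p) / ((s : ℝ) + k * q) - (p : ℝ) / q) := by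
  have hq' : (q : ℝ) ≠ 0 := by positivity
  have hL' : (p : ℝ) * s - q * r = 1 := by exact_mod_cast hL
  have on_line (k : ℕ) : (1 : ℝ) / ((s : ℝ) + k * q) =
      -(q : ℝ) * (((r : ℝ) + k * p) / ((s : ℝ) + k * q) - (p : ℝ) / q) :=
    one_div_eq_neg_mul_sub_of_det_eq_one hq' (by positivity) (by linear_combination hL')
  refine ⟨?_, on_line⟩
  have h0 : (1 : ℝ) / s = -q * (r / s - p / q) := by simpa using on_line 0
  rw [sub_zero]
  exact div_eq_of_eq_mul (right_ne_zero_of_mul (h0 ▸ one_div_ne_zero (by positivity))) h0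
end

section
/- For every rational number α there exists a unique pair γ_L, γ_R of extended rationals forming a Farey pair such that α is their mediant, α = γ_L ⊕ γ_R. -/
private lemma key_unique (a b p q p' q' : ℤ) (hb : 0 < b)
    (hpq : p * b - q * a = 1) (h0 : 0 ≤ q) (h1 : q < b)
    (hpq' : p' * b - q' * a = 1) (h0' : 0 ≤ q') (h1' : q' ≤ b)
    (htop : q' = b → p' = a - 1) :
    p' = p ∧ q' = q := by
  have hco : IsCoprime b a := ⟨p, -q, by linarith⟩
  have hdvd : b ∣ (q' - q) * a := ⟨p' - p, by ring_nf; linarith⟩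
  obtain ⟨k, hk⟩ := hco.dvd_of_dvd_mul_right hdvd
  have hkle : b * k ≤ b * 1 := by rw [mul_one]; linarith
  have hk1 : k ≤ 1 := le_of_mul_le_mul_left hkle hb
  have hkgt : b * (-1) < b * k := by linarith
  have hk0 : -1 < k := lt_of_mul_lt_mul_left hkgt hb.le
  interval_cases k
  · have hq : q' = q := by linarith
    subst hq
    have hp : (p' - p) * b = 0 := by linear_combination hpq' - hpq
    have : p' - p = 0 := by
      rcases mul_eq_zero.mp hp with h | h
      · exact h
      · omega
    constructor <;> omega
  · exfalso
    have hq' : q' = b := by linarith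
    have hp' : p' = a - 1 := htop hq'
    rw [hq', hp'] at hpq'
    have hcontra : -b = 1 := by linear_combination hpq'
    omega

/-- Every rational `a/b` (lowest terms, positive denominator) is the mediant of a
unique (unordered) Farey pair of extended rationals. -/
theorem exists_unique_parents (a b : ℤ) (hb : 0 < b) (hab : Int.gcd a b = 1) :
    ∃ x y : ℤ × ℤ,
      (IsExtRat x ∧ IsExtRat y ∧ FareyPair x y ∧ (a, b) = x + y) ∧
      ∀ x' y' : ℤ × ℤ,
        (IsExtRat x' ∧ IsExtRat y' ∧ FareyPair x' y' ∧ (a, b) = x' + y') →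
        (x' = x ∧ y' = y) ∨ (x' = y ∧ y' = x) := by
  obtain ⟨u, v, huv⟩ := Int.isCoprime_iff_gcd_eq_one.mpr hab
  set t : ℤ := (-u) / b with ht
  set q : ℤ := -u - b * t with hqdef
  set p : ℤ := v - t * a with hpdef
  have hbne : b ≠ 0 := hb.ne'
  have hqmod : q = (-u) % b := by rw [hqdef, Int.emod_def, ht]
  have hq0 : 0 ≤ q := by rw [hqmod]; exact Int.emod_nonneg _ hbne
  have hq1 : q < b := by rw [hqmod]; exact Int.emod_lt_of_pos _ hb
  have hpq : p * b - q * a = 1 := by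
    rw [hpdef, hqdef]; linear_combination huv
  have hxrat : IsExtRat (p, q) := by
    refine ⟨hq0, ?_, ?_⟩
    · exact Int.isCoprime_iff_gcd_eq_one.mp ⟨b, -a, by linarith⟩
    · intro h
      simp only at h
      have hpb : p * b = 1 := by rw [h] at hpq; linarith
      have hb1 : b = 1 := by
        have hdvd : b ∣ 1 := ⟨p, by linarith⟩
        exact Int.eq_one_of_dvd_one hb.le hdvd
      rw [hb1, mul_one] at hpb
      exact hpb
  have hyrat : IsExtRat (a - p, b - q) := by
    refine ⟨by simp only; linarith, ?_, ?_⟩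
    · exact Int.isCoprime_iff_gcd_eq_one.mp ⟨-b, a, by ring_nf; linarith⟩
    · intro h; simp only at h; omega
  refine ⟨(p, q), (a - p, b - q), ⟨hxrat, hyrat, ?_, ?_⟩, ?_⟩
  · left; simp only; ring_nf; linarith
  · simp [Prod.ext_iff]
  · rintro ⟨p', q'⟩ ⟨r', s'⟩ ⟨hx', hy', hf', hsum'⟩
    obtain ⟨hq0', hgx', htopx'⟩ := hx'
    obtain ⟨hs0', hgy', htopy'⟩ := hy'
    simp only at hq0' hs0' htopx' htopy'
    have hsa : a = p' + r' ∧ b = q' + s' := by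
      rw [Prod.ext_iff] at hsum'; exact hsum'
    obtain ⟨ha, hbeq⟩ := hsa
    rcases hf' with h1 | h1
    · simp only at h1
      have hpq' : p' * b - q' * a = 1 := by
        rw [ha, hbeq]; linarith [h1]
      have htop : q' = b → p' = a - 1 := by
        intro h
        have hs0 : s' = 0 := by omega
        have : r' = 1 := htopy' hs0
        omega
      obtain ⟨hpp, hqq⟩ := key_unique a b p q p' q' hb hpq hq0 hq1 hpq'
        hq0' (by omega) htop
      left
      constructor
      · exact Prod.ext hpp hqq
      · refine Prod.ext ?_ ?_ <;> simp only <;> omega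
    · simp only at h1
      have hpq' : r' * b - s' * a = 1 := by
        rw [ha, hbeq]; linarith [h1]
      have htop : s' = b → r' = a - 1 := by
        intro h
        have hq0'' : q' = 0 := by omega
        have : p' = 1 := htopx' hq0''
        omega
      obtain ⟨hpp, hqq⟩ := key_unique a b p q r' s' hb hpq hq0 hq1 hpq'
        hs0' (by omega) htop
      right
      constructor
      · refine Prod.ext ?_ ?_ <;> simp only <;> omega
      · exact Prod.ext hpp hqq
end

section
/- For every rational number p/q there exists a unique Farey pair x/y, z/w of extended rationals such that p/q = (x/y) ⊕ (z/w) ⊕ (z/w), i.e., p = x + 2z and q = y + 2w with xw - yz = ±1. -/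
/-!
Writing `z/w` for the repeated summand, the other summand is `x/y = (p - 2z)/(q - 2w)` and
`xw - yz = pw - qz`, so one looks for `(z, w)` with `pw - qz = ±1` and `0 ≤ w ≤ q/2`.
Bézout gives, for `q > 1`, a solution of `pw - qz = 1` with `0 < w < q`; either it or its
reflection `(p - z, q - w)` has `w ≤ q/2`. For uniqueness, two solutions satisfy
`q (zw' - wz') = w (pw' - qz') - w' (pw - qz)`, of absolute value at most `w + w' ≤ q`. Hence
either the determinant `zw' - wz'` vanishes, and the two extended rationals coincide, or
`w = w' = q/2`, where `x/y = 1/0` pins down `z = (p - 1)/2`.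
-/

theorem FareyPair.isCoprime_left {a b : ℤ × ℤ} (h : FareyPair a b) : IsCoprime a.1 a.2 := by
  rcases h with h | h
  · exact ⟨b.2, -b.1, by linear_combination h⟩
  · exact ⟨-b.2, b.1, by linear_combination -h⟩

theorem FareyPair.isCoprime_right {a b : ℤ × ℤ} (h : FareyPair a b) : IsCoprime b.1 b.2 := by
  rcases h with h | h
  · exact ⟨-a.2, a.1, by linear_combination h⟩
  · exact ⟨a.2, -a.1, by linear_combination -h⟩

theorem isExtRat_iff_of_isCoprime {v : ℤ × ℤ} (hv : IsCoprime v.1 v.2) :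
    IsExtRat v ↔ 0 ≤ v.2 ∧ (v.2 = 0 → v.1 = 1) := by
  simp only [IsExtRat, Int.isCoprime_iff_gcd_eq_one.mp hv, true_and]

theorem fareyPair_add_mul_left_iff (x y z w k : ℤ) :
    FareyPair (x + k * z, y + k * w) (z, w) ↔ FareyPair (x, y) (z, w) := by
  simp only [FareyPair]
  ring_nf

theorem IsExtRat.eq_of_mul_eq_mul {a b : ℤ × ℤ} (ha : IsExtRat a) (hb : IsExtRat b)
    (h : a.1 * b.2 = a.2 * b.1) : a = b := by
  obtain ⟨x, y⟩ := a
  obtain ⟨z, w⟩ := b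
  obtain ⟨hy, hxy, hy0⟩ := ha
  obtain ⟨hw, hzw, hw0⟩ := hb
  dsimp only at *
  have hyw : y = w := by
    refine Int.dvd_antisymm hy hw ?_ ?_
    · exact (Int.isCoprime_iff_gcd_eq_one.2 hxy).symm.dvd_of_dvd_mul_left ⟨z, h⟩
    · exact (Int.isCoprime_iff_gcd_eq_one.2 hzw).symm.dvd_of_dvd_mul_left ⟨x, by linarith⟩
  subst hyw
  rcases eq_or_ne y 0 with rfl | hy
  · rw [hy0 rfl, hw0 rfl]
  · rw [mul_comm y z] at h
    rw [mul_right_cancel₀ hy h]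

/-- `b = (z, w)` is the repeated summand in `p/q = (x/y) ⊕ (z/w) ⊕ (z/w)`, where
`x/y = (p - 2z)/(q - 2w)`; the gcd conditions are left out, as the Farey condition implies them. -/
def IsDoubledSummand (p q : ℤ) (b : ℤ × ℤ) : Prop :=
  FareyPair (p, q) b ∧ 0 ≤ b.2 ∧ 2 * b.2 ≤ q ∧ (b.2 = 0 → b.1 = 1) ∧
    (2 * b.2 = q → p - 2 * b.1 = 1)

theorem IsDoubledSummand.isExtRat {p q : ℤ} {b : ℤ × ℤ} (hb : IsDoubledSummand p q b) :
    IsExtRat b :=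
  (isExtRat_iff_of_isCoprime hb.1.isCoprime_right).2 ⟨hb.2.1, hb.2.2.2.1⟩

theorem isDoubledSummand_iff (p q : ℤ) (a b : ℤ × ℤ) :
    (IsExtRat a ∧ IsExtRat b ∧ FareyPair a b ∧ p = a.1 + 2 * b.1 ∧ q = a.2 + 2 * b.2) ↔
      a = (p - 2 * b.1, q - 2 * b.2) ∧ IsDoubledSummand p q b := by
  obtain ⟨x, y⟩ := a
  obtain ⟨z, w⟩ := b
  constructor
  · rintro ⟨⟨hy, -, hy0⟩, hb, hab, rfl, rfl⟩
    dsimp only at *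
    refine ⟨by simp, (fareyPair_add_mul_left_iff x y z w 2).2 hab, hb.1, by omega, hb.2.2,
      fun h ↦ ?_⟩
    have := hy0 (by omega)
    omega
  · rintro ⟨ha, hb⟩
    obtain ⟨rfl, rfl⟩ := Prod.mk.inj ha
    have hab : FareyPair (p - 2 * z, q - 2 * w) (z, w) := by
      rw [← fareyPair_add_mul_left_iff _ _ z w 2, sub_add_cancel, sub_add_cancel]
      exact hb.1
    have hext := hb.isExtRat
    obtain ⟨-, hw, hwq, -, hx⟩ := hb
    dsimp only at hw hwq hx
    exact ⟨(isExtRat_iff_of_isCoprime hab.isCoprime_left).2 ⟨by dsimp only; omega,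
      fun h ↦ hx (by dsimp only at h; omega)⟩, hext, hab, by ring, by ring⟩

theorem IsDoubledSummand.unique {p q : ℤ} {b b' : ℤ × ℤ} (hq : 0 < q)
    (hb : IsDoubledSummand p q b) (hb' : IsDoubledSummand p q b') : b = b' := by
  obtain ⟨z, w⟩ := b
  obtain ⟨z', w'⟩ := b'
  have hext := hb.isExtRat
  have hext' := hb'.isExtRat
  obtain ⟨hd, hw, hwq, -, hx⟩ := hb
  obtain ⟨hd', hw', hwq', -, hx'⟩ := hb'
  simp only [FareyPair] at hd hd' hw hwq hx hw' hwq' hx'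
  have hdet : q * (z * w' - w * z') = w * (p * w' - q * z') - w' * (p * w - q * z) := by ring
  have hbound : -q ≤ q * (z * w' - w * z') ∧ q * (z * w' - w * z') ≤ q := by
    rw [hdet]
    rcases hd with h | h <;> rcases hd' with h' | h' <;> rw [h, h'] <;> omega
  obtain h | h : z * w' - w * z' = 0 ∨ z * w' - w * z' = 1 ∨ z * w' - w * z' = -1 := by
    have : -1 ≤ z * w' - w * z' := by nlinarith
    have : z * w' - w * z' ≤ 1 := by nlinarith
    omega
  · exact hext.eq_of_mul_eq_mul hext' (by dsimp only; linarith)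
  · have hww : w = w' ∧ 2 * w = q := by
      rcases h with h | h <;> rw [h] at hdet <;> rcases hd with hd | hd <;>
        rcases hd' with hd' | hd' <;> rw [hd, hd'] at hdet <;> omega
    have := hx hww.2
    have := hx' (hww.1 ▸ hww.2)
    exact Prod.ext (by omega) hww.1

theorem exists_mul_sub_mul_eq_one {p q : ℤ} (hq : 1 < q) (hpq : IsCoprime p q) :
    ∃ z w, p * w - q * z = 1 ∧ 0 < w ∧ w < q := by
  obtain ⟨u, v, huv⟩ := hpq
  have hz : p * (u % q) - q * (-(v + p * (u / q))) = 1 := by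
    rw [Int.emod_def]
    linear_combination huv
  refine ⟨_, u % q, hz, ?_, Int.emod_lt_of_pos u (by omega)⟩
  refine (Int.emod_nonneg u (by omega)).lt_of_ne fun h ↦ ?_
  rw [← h] at hz
  have := Int.le_of_dvd one_pos (show q ∣ 1 from ⟨v + p * (u / q), by linear_combination -hz⟩)
  omega

theorem exists_isDoubledSummand {p q : ℤ} (hq : 0 < q) (hpq : IsCoprime p q) :
    ∃ b, IsDoubledSummand p q b := by
  obtain rfl | hq := (show 1 ≤ q by omega).eq_or_lt
  · exact ⟨(1, 0), Or.inr (by ring), le_rfl, by omega, fun _ ↦ rfl, by omega⟩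
  obtain ⟨z, w, hzw, hw, hwq⟩ := exists_mul_sub_mul_eq_one hq hpq
  by_cases hw2 : 2 * w ≤ q
  · refine ⟨(z, w), Or.inl hzw, hw.le, hw2, by omega, fun h ↦ ?_⟩
    have hw1 : w * (p - 2 * z) = 1 := by linear_combination hzw - z * h
    obtain rfl := Int.eq_one_of_mul_eq_one_right hw.le hw1
    linarith
  · exact ⟨(p - z, q - w), Or.inr (by linear_combination -hzw), by omega, by omega, by omega,
      by omega⟩

/-- For every rational `p/q` there is a unique Farey pair `x/y`, `z/w` of extended
rationals with `p/q = (x/y) ⊕ (z/w) ⊕ (z/w)`, i.e. `p = x + 2z`, `q = y + 2w` with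
`x*w - y*z = ±1`. -/
theorem exists_unique_double_decomposition (p q : ℤ) (hq : 0 < q) (hpq : Int.gcd p q = 1) :
    ∃! v : (ℤ × ℤ) × (ℤ × ℤ),
      IsExtRat v.1 ∧ IsExtRat v.2 ∧ FareyPair v.1 v.2 ∧
      p = v.1.1 + 2 * v.2.1 ∧ q = v.1.2 + 2 * v.2.2 := by
  obtain ⟨b, hb⟩ := exists_isDoubledSummand hq (Int.isCoprime_iff_gcd_eq_one.2 hpq)
  refine ⟨((p - 2 * b.1, q - 2 * b.2), b), (isDoubledSummand_iff p q _ _).2 ⟨rfl, hb⟩, ?_⟩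
  rintro ⟨a', b'⟩ h
  obtain ⟨rfl, hb'⟩ := (isDoubledSummand_iff p q a' b').1 h
  rw [hb'.unique hq hb]
end

section
/- Let R be a commutative ring, d₁, d₂ : ℚ̂ → R functions with d₁(1/0) invertible in R, and a, b, c ∈ R. Then there exists a unique function F : ℚ̂ → R satisfying F(0/1) = a, F(1/0) = b, F(1/1) = c, and for every Farey pair (α, γ) with γ ∈ ∂(α): F(γ ⊕² α) = -d₁(α)·F(γ) + d₂(α)·F(γ ⊕ α). -/
/-- The set `ℚ̂ = ℚ ∪ {1/0}` of extended rationals, as fractions in lowest terms. -/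
def ExtRat : Type := {v : ℤ × ℤ // IsExtRat v}

section IntRecurrence

variable {R : Type*} [CommRing R] {D₁ : R}

noncomputable def recurrenceShift (hD₁ : IsUnit D₁) (D₂ : R) : Equiv.Perm (R × R) where
  toFun v := (v.2, -D₁ * v.1 + D₂ * v.2)
  invFun v := (hD₁.unit⁻¹ * (D₂ * v.1 - v.2), v.1)
  left_inv v := by
    ext
    · linear_combination v.1 * hD₁.val_inv_mul
    · rfl
  right_inv v := by
    ext
    · rfl
    · linear_combination -(D₂ * v.1 - v.2) * hD₁.mul_val_inv

theorem exists_int_recurrence (hD₁ : IsUnit D₁) (D₂ a c : R) :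
    ∃ f : ℤ → R, f 0 = a ∧ f 1 = c ∧ ∀ n, f (n + 2) = -D₁ * f n + D₂ * f (n + 1) := by
  set σ := recurrenceShift hD₁ D₂
  have hσ (n : ℤ) : (σ ^ (n + 1)) (a, c) = σ ((σ ^ n) (a, c)) := by
    rw [add_comm, zpow_one_add, Equiv.Perm.mul_apply]
  refine ⟨fun n ↦ ((σ ^ n) (a, c)).1, rfl, rfl, fun n ↦ ?_⟩
  simp only [show n + 2 = n + 1 + 1 by ring, hσ]
  rfl

theorem eq_zero_of_int_recurrence (hD₁ : IsUnit D₁) {D₂ : R} {f : ℤ → R}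
    (hf : ∀ n, f (n + 2) = -D₁ * f n + D₂ * f (n + 1)) (h0 : f 0 = 0) (h1 : f 1 = 0) :
    f = 0 := by
  have key (n : ℤ) : f n = 0 ∧ f (n + 1) = 0 := by
    induction n using Int.inductionOn' (b := 0) with
    | zero => exact ⟨h0, h1⟩
    | succ k _ ih =>
      exact ⟨ih.2, by rw [add_assoc, one_add_one_eq_two, hf, ih.1, ih.2]; ring⟩
    | pred k _ ih =>
      refine ⟨?_, by rw [sub_add_cancel]; exact ih.1⟩
      have hk := hf (k - 1)
      rw [show k - 1 + 2 = k + 1 by ring, sub_add_cancel, ih.1, ih.2] at hk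
      exact hD₁.mul_right_eq_zero.mp (by linear_combination hk)
  exact funext fun n ↦ (key n).1

end IntRecurrence

theorem FareyPair.gcd_eq_one {v w : ℤ × ℤ} (h : FareyPair v w) : Int.gcd v.1 v.2 = 1 := by
  rw [← Int.isCoprime_iff_gcd_eq_one]
  rcases h with h | h
  · exact ⟨w.2, -w.1, by linear_combination h⟩
  · exact ⟨-w.2, w.1, by linear_combination -h⟩

theorem FareyPair.symm {v w : ℤ × ℤ} (h : FareyPair v w) : FareyPair w v := by
  unfold FareyPair at h ⊢
  rw [show w.1 * v.2 - w.2 * v.1 = -(v.1 * w.2 - v.2 * w.1) by ring]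
  generalize v.1 * w.2 - v.2 * w.1 = d at h ⊢
  omega

theorem fareyPair_add_right_iff {v w : ℤ × ℤ} : FareyPair v (w + v) ↔ FareyPair v w := by
  simp only [FareyPair, Prod.fst_add, Prod.snd_add]
  ring_nf

theorem exists_parent_coeffs {p q : ℤ} (hq : 2 ≤ q) (hpq : IsCoprime p q) :
    ∃ r s : ℤ, FareyPair (r, s) (p, q) ∧ 0 < s ∧ 2 * s ≤ q ∧
      (2 * s = q → p - 2 * r = 1) := by
  obtain ⟨u, v, huv⟩ := hpq
  obtain ⟨r, s, hrs, hs0, hsq⟩ : ∃ r s : ℤ, r * q - s * p = 1 ∧ 0 ≤ s ∧ s < q :=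
    ⟨v - (-u / q) * p, -u % q, by linear_combination huv - p * Int.emod_add_mul_ediv (-u) q,
      Int.emod_nonneg _ (by omega), Int.emod_lt_of_pos _ (by omega)⟩
  have hs : s ≠ 0 := by
    rintro rfl
    have := Int.eq_one_of_mul_eq_one_right (by omega) (by linear_combination hrs : q * r = 1)
    omega
  rcases lt_trichotomy (2 * s) q with hlt | heq | hgt
  · exact ⟨r, s, Or.inl (by simpa using hrs), by omega, by omega, by omega⟩
  · have hs1 : s = 1 := Int.eq_one_of_mul_eq_one_right (by omega)
      (by linear_combination hrs + r * heq : s * (2 * r - p) = 1)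
    subst hs1
    exact ⟨r - 1, 1, Or.inr (by linear_combination hrs + heq), by omega, by omega,
      fun _ ↦ by linear_combination -hrs - r * heq⟩
  · exact ⟨p - r, q - s, Or.inr (by linear_combination -hrs), by omega, by omega, by omega⟩

theorem parent_coeffs_unique {p q r s r' s' : ℤ}
    (h : FareyPair (r, s) (p, q)) (hs : 0 < s) (hsq : 2 * s ≤ q)
    (ht : 2 * s = q → p - 2 * r = 1)
    (h' : FareyPair (r', s') (p, q)) (hs' : 0 < s') (hsq' : 2 * s' ≤ q)
    (ht' : 2 * s' = q → p - 2 * r' = 1) :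
    r = r' ∧ s = s' := by
  simp only [FareyPair] at h h'
  have hdvd : q ∣ s' * (r * q - s * p) - s * (r' * q - s' * p) :=
    ⟨s' * r - s * r', by ring⟩
  have hle := fun hne ↦ Int.natAbs_le_of_dvd_ne_zero hdvd hne
  -- so `q ∣ s' - s` or `q ∣ s' + s`, the latter only for determinants of opposite signs
  obtain rfl : s = s' := by
    rcases h with h | h <;> rcases h' with h' | h' <;> rw [h, h'] at hle <;> omega
  refine ⟨?_, rfl⟩
  by_cases hq : 2 * s = q
  · linarith [ht hq, ht' hq]
  · have hε : r * q - s * p = r' * q - s * p := by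
      rcases h with h | h <;> rcases h' with h' | h' <;> rw [h, h'] at hle ⊢ <;> omega
    exact mul_right_cancel₀ (by omega : q ≠ 0) (by linarith)

namespace ExtRat

def infty : ExtRat := ⟨(1, 0), by unfold IsExtRat; decide⟩

def ofInt (n : ℤ) : ExtRat := ⟨(n, 1), zero_le_one, by simp, by simp⟩

theorem eq_infty_of_den_eq_zero {x : ExtRat} (hx : x.val.2 = 0) : x = infty :=
  Subtype.ext (Prod.ext (x.2.2.2 hx) hx)

theorem eq_ofInt_of_den_eq_one {x : ExtRat} (hx : x.val.2 = 1) : x = ofInt x.val.1 :=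
  Subtype.ext (Prod.ext rfl hx)

theorem two_le_den {x : ExtRat} (h0 : x.val.2 ≠ 0) (h1 : x.val.2 ≠ 1) : 2 ≤ x.val.2 := by
  have := x.2.1
  omega

theorem den_eq_one_of_fareyPair_infty {γ : ExtRat} (h : FareyPair infty.val γ.val) :
    γ.val.2 = 1 := by
  have := γ.2.1
  simp only [FareyPair, infty] at h
  omega

theorem fareyPair_infty_ofInt (n : ℤ) : FareyPair infty.val (ofInt n).val := by
  simp [FareyPair, infty, ofInt]

def mediant (α γ : ExtRat) (h : FareyPair α.val γ.val) : ExtRat :=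
  ⟨γ.val + α.val, add_nonneg γ.2.1 α.2.1, (fareyPair_add_right_iff.mpr h).symm.gcd_eq_one,
    fun h0 ↦ by
      obtain ⟨hγ, hα⟩ : γ.val.2 = 0 ∧ α.val.2 = 0 := by
        have := α.2.1; have := γ.2.1; simp only [Prod.snd_add] at h0; omega
      rcases h with h | h <;> simp [hγ, hα] at h⟩

/-- `IsParent x α γ` says that `x = γ ⊕² α` with `α ≠ 1/0`. -/
structure IsParent (x α γ : ExtRat) : Prop where
  fareyPair : FareyPair α.val γ.val
  num_eq : x.val.1 = γ.val.1 + 2 * α.val.1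
  den_eq : x.val.2 = γ.val.2 + 2 * α.val.2
  den_pos : 0 < α.val.2

theorem isParent_iff {x α γ : ExtRat} : IsParent x α γ ↔
    FareyPair α.val γ.val ∧ x.val = γ.val + α.val + α.val ∧ α.val.2 ≠ 0 := by
  have := α.2.1
  simp only [Prod.ext_iff, Prod.fst_add, Prod.snd_add]
  constructor
  · rintro ⟨hF, h1, h2, hα⟩
    exact ⟨hF, ⟨by omega, by omega⟩, by omega⟩
  · rintro ⟨hF, ⟨h1, h2⟩, hα⟩
    exact ⟨hF, by omega, by omega, by omega⟩

namespace IsParent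

variable {x α γ : ExtRat}

theorem den_lt (h : IsParent x α γ) : γ.val.2 < x.val.2 := by
  have := h.den_eq; have := h.den_pos
  omega

theorem mediant_den_lt (h : IsParent x α γ) : (mediant α γ h.fareyPair).val.2 < x.val.2 := by
  have := h.den_eq; have := h.den_pos; have := γ.2.1
  show γ.val.2 + α.val.2 < x.val.2
  omega

theorem two_mul_den_le (h : IsParent x α γ) : 2 * α.val.2 ≤ x.val.2 := by
  have := h.den_eq; have := γ.2.1
  omega

theorem num_sub_two_mul_eq_one (h : IsParent x α γ) (hq : 2 * α.val.2 = x.val.2) :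
    x.val.1 - 2 * α.val.1 = 1 := by
  have := h.den_eq; have := h.num_eq; have := γ.2.2.2
  omega

theorem fareyPair_left (h : IsParent x α γ) : FareyPair α.val x.val := by
  obtain ⟨hF, hx, -⟩ := isParent_iff.mp h
  rwa [hx, fareyPair_add_right_iff, fareyPair_add_right_iff]

theorem unique {α' γ' : ExtRat} (h : IsParent x α γ) (h' : IsParent x α' γ') :
    α = α' ∧ γ = γ' := by
  obtain rfl : α = α' := by
    obtain ⟨hr, hs⟩ := parent_coeffs_unique
      h.fareyPair_left h.den_pos h.two_mul_den_le h.num_sub_two_mul_eq_one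
      h'.fareyPair_left h'.den_pos h'.two_mul_den_le h'.num_sub_two_mul_eq_one
    exact Subtype.ext (Prod.ext hr hs)
  refine ⟨rfl, Subtype.ext (Prod.ext ?_ ?_)⟩
  · have := h.num_eq; have := h'.num_eq
    omega
  · have := h.den_eq; have := h'.den_eq
    omega

end IsParent

theorem exists_isParent (x : ExtRat) (hx : 2 ≤ x.val.2) :
    ∃ αγ : ExtRat × ExtRat, IsParent x αγ.1 αγ.2 := by
  obtain ⟨r, s, hF, hs, hsq, ht⟩ :=
    exists_parent_coeffs hx (Int.isCoprime_iff_gcd_eq_one.mpr x.2.2.1)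
  have hFγ : FareyPair (r, s) (x.val.1 - 2 * r, x.val.2 - 2 * s) := by
    simp only [FareyPair] at hF ⊢
    rcases hF with hF | hF
    · left; linear_combination hF
    · right; linear_combination hF
  let α : ExtRat := ⟨(r, s), hs.le, hF.gcd_eq_one, by omega⟩
  let γ : ExtRat := ⟨(x.val.1 - 2 * r, x.val.2 - 2 * s), by simp; omega,
    hFγ.symm.gcd_eq_one, fun h ↦ ht (by simp at h; omega)⟩
  exact ⟨(α, γ), hFγ, by simp [α, γ], by simp [α, γ], hs⟩

noncomputable def parent (x : ExtRat) (hx : 2 ≤ x.val.2) : ExtRat × ExtRat :=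
  (exists_isParent x hx).choose

theorem isParent_parent (x : ExtRat) (hx : 2 ≤ x.val.2) :
    IsParent x (parent x hx).1 (parent x hx).2 :=
  (exists_isParent x hx).choose_spec

theorem parent_eq {x α γ : ExtRat} (hx : 2 ≤ x.val.2) (h : IsParent x α γ) :
    parent x hx = (α, γ) :=
  Prod.ext ((isParent_parent x hx).unique h).1 ((isParent_parent x hx).unique h).2

end ExtRat

open ExtRat

section FRF

variable {R : Type*} [CommRing R]

def IsFRF (d₁ d₂ : ExtRat → R) (F : ExtRat → R) : Prop :=
  ∀ α γ : ExtRat, FareyPair α.val γ.val →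
    ∀ m m2 : ExtRat, m.val = γ.val + α.val → m2.val = γ.val + α.val + α.val →
      F m2 = -d₁ α * F γ + d₂ α * F m

noncomputable def extendFRF (d₁ d₂ : ExtRat → R) (b : R) (f : ℤ → R) (x : ExtRat) : R :=
  if h0 : x.val.2 = 0 then b
  else if h1 : x.val.2 = 1 then f x.val.1
  else
    have hx := two_le_den h0 h1;
    -d₁ (parent x hx).1 * extendFRF d₁ d₂ b f (parent x hx).2 +
      d₂ (parent x hx).1 * extendFRF d₁ d₂ b f (mediant _ _ (isParent_parent x hx).fareyPair)
termination_by x.val.2.toNat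
decreasing_by
  all_goals
    have := (isParent_parent x hx).den_lt
    have := (isParent_parent x hx).mediant_den_lt
    have := (parent x hx).2.2.1
    omega

variable {d₁ d₂ : ExtRat → R} {b : R} {f : ℤ → R}

theorem extendFRF_infty : extendFRF d₁ d₂ b f infty = b := by
  rw [extendFRF]
  exact dif_pos rfl

theorem extendFRF_ofInt (n : ℤ) : extendFRF d₁ d₂ b f (ofInt n) = f n := by
  rw [extendFRF]
  exact (dif_neg one_ne_zero).trans (dif_pos rfl)

theorem extendFRF_of_isParent {x α γ : ExtRat} (h : IsParent x α γ) :
    extendFRF d₁ d₂ b f x =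
      -d₁ α * extendFRF d₁ d₂ b f γ + d₂ α * extendFRF d₁ d₂ b f (mediant α γ h.fareyPair) := by
  have := h.two_mul_den_le
  have := h.den_pos
  rw [extendFRF, dif_neg (by omega), dif_neg (by omega)]
  simp only [parent_eq (by omega) h]

theorem isFRF_extendFRF (hf : ∀ n, f (n + 2) = -d₁ infty * f n + d₂ infty * f (n + 1)) :
    IsFRF d₁ d₂ (extendFRF d₁ d₂ b f) := by
  intro α γ hαγ m m2 hm hm2
  by_cases hα : α.val.2 = 0
  · obtain rfl := eq_infty_of_den_eq_zero hα
    have hγ := eq_ofInt_of_den_eq_one (den_eq_one_of_fareyPair_infty hαγ)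
    set n := γ.val.1
    obtain rfl : m = ofInt (n + 1) := by
      rw [hγ] at hm
      exact Subtype.ext (hm.trans (by simp [ofInt, infty]))
    obtain rfl : m2 = ofInt (n + 2) := by
      rw [hγ] at hm2
      exact Subtype.ext (hm2.trans (by simp [ofInt, infty]; ring))
    rw [hγ, extendFRF_ofInt, extendFRF_ofInt, extendFRF_ofInt, hf]
  · obtain rfl : m = mediant α γ hαγ := Subtype.ext hm
    exact extendFRF_of_isParent (isParent_iff.mpr ⟨hαγ, hm2, hα⟩)

namespace IsFRF

variable {F G : ExtRat → R}

theorem sub (hF : IsFRF d₁ d₂ F) (hG : IsFRF d₁ d₂ G) : IsFRF d₁ d₂ (F - G) := by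
  intro α γ hαγ m m2 hm hm2
  simp only [Pi.sub_apply, hF α γ hαγ m m2 hm hm2, hG α γ hαγ m m2 hm hm2]
  ring

theorem ofInt_add_two (hF : IsFRF d₁ d₂ F) (n : ℤ) :
    F (ofInt (n + 2)) = -d₁ infty * F (ofInt n) + d₂ infty * F (ofInt (n + 1)) :=
  hF infty (ofInt n) (fareyPair_infty_ofInt n) _ _ (by simp [ofInt, infty])
    (by simp [ofInt, infty]; ring)

theorem apply_of_isParent (hF : IsFRF d₁ d₂ F) {x α γ : ExtRat} (h : IsParent x α γ) :
    F x = -d₁ α * F γ + d₂ α * F (mediant α γ h.fareyPair) :=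
  hF α γ h.fareyPair _ x rfl (isParent_iff.mp h).2.1

theorem eq_zero (hF : IsFRF d₁ d₂ F) (hinv : IsUnit (d₁ infty))
    (h0 : F (ofInt 0) = 0) (h1 : F (ofInt 1) = 0) (hinf : F infty = 0) : F = 0 := by
  have hint (n : ℤ) : F (ofInt n) = 0 :=
    congrFun (eq_zero_of_int_recurrence (f := fun n ↦ F (ofInt n)) hinv hF.ofInt_add_two h0 h1)
      n
  funext x
  induction hn : x.val.2.toNat using Nat.strong_induction_on generalizing x with
  | _ n ih =>
    by_cases hx0 : x.val.2 = 0
    · rw [eq_infty_of_den_eq_zero hx0, hinf]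
      rfl
    by_cases hx1 : x.val.2 = 1
    · rw [eq_ofInt_of_den_eq_one hx1, hint]
      rfl
    have hp := isParent_parent x (two_le_den hx0 hx1)
    have := hp.den_lt
    have := hp.mediant_den_lt
    have := (parent x (two_le_den hx0 hx1)).2.2.1
    rw [hF.apply_of_isParent hp, ih _ (by omega) _ rfl, ih _ (by omega) _ rfl]
    simp

end IsFRF

end FRF

/-- Given a commutative ring `R`, functions `d₁ d₂ : ℚ̂ → R` with `d₁(1/0)` invertible,
and `a b c ∈ R`, there is a unique `(d₁,d₂)`-Farey recursive function `F : ℚ̂ → R` with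
`F(0/1) = a`, `F(1/0) = b`, `F(1/1) = c`; i.e. `F(γ ⊕² α) = -d₁(α)F(γ) + d₂(α)F(γ ⊕ α)`
for every Farey pair `α, γ`. -/
theorem exists_unique_FRF (R : Type*) [CommRing R] (d₁ d₂ : ExtRat → R)
    (hinv : IsUnit (d₁ ⟨(1, 0), by unfold IsExtRat; decide⟩)) (a b c : R) :
    ∃! F : ExtRat → R,
      F ⟨(0, 1), by unfold IsExtRat; decide⟩ = a ∧ F ⟨(1, 0), by unfold IsExtRat; decide⟩ = b ∧ F ⟨(1, 1), by unfold IsExtRat; decide⟩ = c ∧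
      ∀ α γ : ExtRat, FareyPair α.val γ.val →
        ∀ m m2 : ExtRat, m.val = γ.val + α.val → m2.val = γ.val + α.val + α.val →
          F m2 = -d₁ α * F γ + d₂ α * F m := by
  obtain ⟨f, hf0, hf1, hf⟩ := exists_int_recurrence hinv (d₂ infty) a c
  set G := extendFRF d₁ d₂ b f
  have hG : IsFRF d₁ d₂ G := isFRF_extendFRF hf
  have hG0 : G (ofInt 0) = a := (extendFRF_ofInt 0).trans hf0
  have hG1 : G (ofInt 1) = c := (extendFRF_ofInt 1).trans hf1
  have hGinf : G infty = b := extendFRF_infty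
  refine ⟨G, ⟨hG0, hGinf, hG1, hG⟩, fun F ⟨h0, hinf, h1, hF⟩ ↦ sub_eq_zero.mp ?_⟩
  exact (IsFRF.sub hF hG).eq_zero hinv (sub_eq_zero.mpr (h0.trans hG0.symm))
    (sub_eq_zero.mpr (h1.trans hG1.symm)) (sub_eq_zero.mpr (hinf.trans hGinf.symm))
end

section
/- Let F : ℚ̂ → R be a Farey recursive function with constant determinant 1 over a commutative ring R. For α ∈ ℚ with parents γ_L, γ_R, let β_{-k} = γ_L ⊕^{k-1} α for k ≥ 1 and β_k = γ_R ⊕^k α for k ≥ 0, and let M_α = [[0,1],[-1,F(α)]]. Then for every n ∈ ℤ, M_α^n · (F(β_0), F(β_1))ᵀ = (F(β_n), F(β_{n+1}))ᵀ. -/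
/-!
Along the wrap `β`, the relation `F(β (n+2)) = -F(β n) + F(α) F(β (n+1))` holds for every
`n`: for `n ≥ 0` it is the determinant-one relation for the Farey pair `(α, β n)`; at `n = -1`
it is the relation for `(γR, γL)`, whose first two iterated mediants are `α` and `β 1`; and
`k ↦ β (-k - 1)` is the wrap with the parents exchanged, which reflects the range `n ≤ -2`
onto `n ≥ -1`. The relation says `M_α (F β n, F β (n+1)) = (F β (n+1), F β (n+2))`, and since
`det M_α = 1` this propagates to all integer powers.
-/

namespace FareyPair

variable {a b : ℤ × ℤ}

theorem of_det_eq (h : FareyPair a b) {c d : ℤ × ℤ}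
    (hdet : c.1 * d.2 - c.2 * d.1 = a.1 * b.2 - a.2 * b.1) : FareyPair c d := by
  unfold FareyPair at *
  rwa [hdet]

theorem symm_s18 (h : FareyPair a b) : FareyPair b a := by
  rcases h with h | h
  exacts [Or.inr (by linarith), Or.inl (by linarith)]

theorem add_left (h : FareyPair a b) : FareyPair (a + b) b :=
  h.of_det_eq (by simp only [Prod.fst_add, Prod.snd_add]; ring)

theorem add_zsmul_right (h : FareyPair a b) (n : ℤ) : FareyPair a (b + n • a) :=
  h.of_det_eq (by
    simp only [Prod.fst_add, Prod.snd_add, Prod.smul_fst, Prod.smul_snd, smul_eq_mul]; ring)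

end FareyPair

namespace Matrix

variable {ι R : Type*} [Fintype ι] [DecidableEq ι] [CommRing R]

theorem zpow_mulVec_of_succ {M : Matrix ι ι R} (hM : IsUnit M.det) {v : ℤ → ι → R}
    (hv : ∀ n, v (n + 1) = M *ᵥ v n) (n : ℤ) : (M ^ n) *ᵥ v 0 = v n := by
  induction n using Int.induction_on with
  | zero => simp
  | succ i ih => rw [add_comm, zpow_one_add hM, ← mulVec_mulVec, ih, add_comm, hv]
  | pred i ih =>
    refine mulVec_injective_of_isUnit ((isUnit_iff_isUnit_det M).mpr hM) ?_
    rw [mulVec_mulVec, ← zpow_one_add hM, ← hv]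
    simpa using ih

theorem companion_mulVec (a x y : R) : !![0, 1; -1, a] *ᵥ ![x, y] = ![y, -x + a * y] := by
  ext i; fin_cases i <;> simp [mulVec, dotProduct]

theorem isUnit_det_companion (a : R) : IsUnit (!![0, 1; -1, a]).det := by
  simp [det_fin_two_of]

theorem companion_zpow_mulVec (a : R) {f : ℤ → R} (hf : ∀ n, f (n + 2) = -f n + a * f (n + 1))
    (n : ℤ) : (!![0, 1; -1, a] ^ n) *ᵥ ![f 0, f 1] = ![f n, f (n + 1)] := by
  simpa only [zero_add] using zpow_mulVec_of_succ (v := fun n ↦ ![f n, f (n + 1)])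
    (isUnit_det_companion a)
    (fun n ↦ by rw [companion_mulVec, add_assoc, one_add_one_eq_two, hf]) n

end Matrix

def IsDetOneFRF {R : Type*} [CommRing R] (F : ExtRat → R) : Prop :=
  ∀ α γ : ExtRat, FareyPair α.val γ.val →
    ∀ m m2 : ExtRat, m.val = γ.val + α.val → m2.val = γ.val + α.val + α.val →
      F m2 = -F γ + F α * F m

namespace IsDetOneFRF

variable {R : Type*} [CommRing R] {F : ExtRat → R} {α γL γR : ExtRat} {β : ℤ → ExtRat}

theorem recurrence_of_neg_one_le (hF : IsDetOneFRF F) (hpar : FareyPair γL.val γR.val)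
    (hmed : α.val = γL.val + γR.val) (hβL : β (-1) = γL)
    (hβpos : ∀ n : ℤ, 0 ≤ n → (β n).val = γR.val + n • α.val) {n : ℤ} (hn : -1 ≤ n) :
    F (β (n + 2)) = -F (β n) + F α * F (β (n + 1)) := by
  rcases hn.eq_or_lt with rfl | hn
  · have hβR : β 0 = γR := Subtype.ext (by simpa using hβpos 0 le_rfl)
    have hβ1 : (β 1).val = γL.val + γR.val + γR.val := by
      rw [hβpos 1 zero_le_one, ← hmed, one_smul, add_comm]
    rw [show (-1 : ℤ) + 2 = 1 by norm_num, neg_add_cancel, hβL, hβR]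
    rw [hF γR γL hpar.symm_s18 α (β 1) hmed hβ1, mul_comm]
  · have hβsucc : ∀ k, n ≤ k → (β (k + 1)).val = (β k).val + α.val := fun k hk ↦ by
      rw [hβpos _ (by omega), hβpos _ (by omega)]; module
    have hFarey : FareyPair α.val (β n).val := by
      rw [hβpos n (by omega), hmed]; exact hpar.add_left.add_zsmul_right n
    refine hF α (β n) hFarey _ _ (hβsucc n le_rfl) ?_
    rw [← hβsucc n le_rfl, ← hβsucc (n + 1) (by omega), add_assoc, one_add_one_eq_two]

theorem recurrence (hF : IsDetOneFRF F) (hpar : FareyPair γL.val γR.val)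
    (hmed : α.val = γL.val + γR.val)
    (hβpos : ∀ n : ℤ, 0 ≤ n → (β n).val = γR.val + n • α.val)
    (hβneg : ∀ n : ℤ, n < 0 → (β n).val = γL.val + (-n - 1) • α.val) (n : ℤ) :
    F (β (n + 2)) = -F (β n) + F α * F (β (n + 1)) := by
  rcases le_or_gt (-1) n with hn | hn
  · exact hF.recurrence_of_neg_one_le hpar hmed
      (Subtype.ext (by simpa using hβneg (-1) (by norm_num))) hβpos hn
  have hrev := hF.recurrence_of_neg_one_le (β := fun k ↦ β (-k - 1)) hpar.symm_s18
    (hmed.trans (add_comm _ _)) (Subtype.ext (by simpa using hβpos 0 le_rfl))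
    (fun k hk ↦ by simpa using hβneg (-k - 1) (by omega)) (n := -n - 3) (by omega)
  simp only [show -(-n - 3 + 2) - 1 = n by ring, show -(-n - 3) - 1 = n + 2 by ring,
    show -(-n - 3 + 1) - 1 = n + 1 by ring] at hrev
  linear_combination hrev

end IsDetOneFRF

theorem FRF_det_one_wraps_general (R : Type*) [CommRing R] (F : ExtRat → R)
    (hF : ∀ α γ : ExtRat, FareyPair α.val γ.val →
      ∀ m m2 : ExtRat, m.val = γ.val + α.val → m2.val = γ.val + α.val + α.val →
        F m2 = -F γ + F α * F m)
    (α γL γR : ExtRat)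
    (hpar : FareyPair γL.val γR.val) (hmed : α.val = γL.val + γR.val)
    (β : ℤ → ExtRat)
    (hβpos : ∀ n : ℤ, 0 ≤ n → (β n).val = γR.val + n • α.val)
    (hβneg : ∀ n : ℤ, n < 0 → (β n).val = γL.val + (-n - 1) • α.val) :
    ∀ n : ℤ,
      ((!![0, 1; -1, F α] : Matrix (Fin 2) (Fin 2) R) ^ n).mulVec ![F (β 0), F (β 1)] =
        ![F (β n), F (β (n + 1))] :=
  Matrix.companion_zpow_mulVec (F α) (f := fun k ↦ F (β k))
    (IsDetOneFRF.recurrence hF hpar hmed hβpos hβneg)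

/-- If `F : ℚ̂ → R` is an FRF with constant determinant `1`
(`F(γ ⊕² α) = -F(γ) + F(α)F(γ ⊕ α)` for all Farey pairs), `α ∈ ℚ` has parents
`γ_L, γ_R`, and `β` wraps around the boundary triangle of `α`
(`β_{-k} = γ_L ⊕^{k-1} α`, `β_k = γ_R ⊕^k α`), then with
`M_α = [[0,1],[-1,F(α)]]` one has `M_α^n (F β_0, F β_1)ᵀ = (F β_n, F β_{n+1})ᵀ`
for every integer `n`. -/
theorem FRF_det_one_wraps (R : Type*) [CommRing R] (F : ExtRat → R)
    (hF : ∀ α γ : ExtRat, FareyPair α.val γ.val →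
      ∀ m m2 : ExtRat, m.val = γ.val + α.val → m2.val = γ.val + α.val + α.val →
        F m2 = -F γ + F α * F m)
    (α γL γR : ExtRat) (hα : 0 < α.val.2)
    (hpar : FareyPair γL.val γR.val) (hmed : α.val = γL.val + γR.val)
    (hleft : γL.val.1 * α.val.2 < γL.val.2 * α.val.1)
    (hright : α.val.1 * γR.val.2 < α.val.2 * γR.val.1)
    (β : ℤ → ExtRat)
    (hβpos : ∀ n : ℤ, 0 ≤ n → (β n).val = γR.val + n • α.val)
    (hβneg : ∀ n : ℤ, n < 0 → (β n).val = γL.val + (-n - 1) • α.val) :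
    ∀ n : ℤ,
      ((!![0, 1; -1, F α] : Matrix (Fin 2) (Fin 2) R) ^ n).mulVec ![F (β 0), F (β 1)] =
        ![F (β n), F (β (n + 1))] :=
  FRF_det_one_wraps_general R F hF α γL γR hpar hmed β hβpos hβneg
end
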